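/- (Schur product theorem) If A and B are n×n real positive semidefinite matrices, then their Hadamard (entrywise) product A ∘ B, with entries (A∘B)ᵢⱼ = Aᵢⱼ Bᵢⱼ, is positive semidefinite. -/

import Mathlib

/-- Schur product theorem: the Hadamard (entrywise) product of two real
positive semidefinite matrices is positive semidefinite. -/
theorem schur_product_theorem {n : ℕ} (A B : Matrix (Fin n) (Fin n) ℝ)
    (hA : A.PosSemidef) (hB : B.PosSemidef) :
    (Matrix.of fun i j => A i j * B i j).PosSemidef :=
  hA.hadamard hB
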